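/- arXiv:math/0104195 — 2 statements merged into one kernel-verified Lean document; each statement's English description precedes it below -/
import Mathlib

section
/- Suppose the ladder system η̄ is maximal for X ⊆ ω₁, and μ̄ is a strongly club-guessing ladder system with dom(μ̄) ⊆ X. Then μ̄ ⊴ η̄. -/
open Set

/-- ω₁, the first uncountable ordinal. -/
noncomputable def omegaOne : Ordinal := (Cardinal.aleph 1).ord

/-- ω₂, the second uncountable ordinal. -/
noncomputable def omegaTwo : Ordinal := (Cardinal.aleph 2).ord

/-- The set of countable ordinals, i.e. ω₁ viewed as a set of ordinals. -/
def omegaOneSet : Set Ordinal := {o | o < omegaOne}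

/-- `A ⊆* B` iff `A \ B` is finite. -/
def AlmostSubset (A B : Set Ordinal) : Prop := (A \ B).Finite

/-- `A =* B` iff `A ⊆* B` and `B ⊆* A`. -/
def AlmostEq (A B : Set Ordinal) : Prop := AlmostSubset A B ∧ AlmostSubset B A

/-- A club subset of ω₁: a set of countable ordinals, unbounded in ω₁ and
closed (every nonzero δ < ω₁ which is a limit of members is a member). -/
def IsClubOmegaOne (C : Set Ordinal) : Prop :=
  C ⊆ omegaOneSet ∧
  (∀ a < omegaOne, ∃ b ∈ C, a < b) ∧
  (∀ δ, δ ≠ 0 → δ < omegaOne → (∀ a < δ, ∃ b ∈ C, a < b ∧ b < δ) → δ ∈ C)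

/-- A stationary subset of ω₁: one meeting every club. -/
def Stationary (S : Set Ordinal) : Prop := ∀ C, IsClubOmegaOne C → (S ∩ C).Nonempty

/-- A ladder system: for each δ in the domain (a set of countable limit ordinals),
a strictly increasing ω-sequence cofinal in δ. -/
structure Ladder where
  dom : Set Ordinal
  toFun : Ordinal → ℕ → Ordinal
  dom_lt : ∀ δ ∈ dom, δ < omegaOne
  mono : ∀ δ ∈ dom, StrictMono (toFun δ)
  lt : ∀ δ ∈ dom, ∀ n, toFun δ n < δ
  cofinal : ∀ δ ∈ dom, ∀ a < δ, ∃ n, a < toFun δ n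

/-- `[η_δ]`, the range of the ladder at δ. -/
def Ladder.lad (η : Ladder) (δ : Ordinal) : Set Ordinal := Set.range (η.toFun δ)

/-- The restriction `η̄↾A`, with domain `dom(η̄) ∩ A`. -/
def Ladder.restrict (η : Ladder) (A : Set Ordinal) : Ladder where
  dom := η.dom ∩ A
  toFun := η.toFun
  dom_lt := fun δ h => η.dom_lt δ h.1
  mono := fun δ h => η.mono δ h.1
  lt := fun δ h => η.lt δ h.1
  cofinal := fun δ h => η.cofinal δ h.1

/-- η̄ is club-guessing iff every club C has some δ ∈ dom(η̄) with `[η_δ] ⊆* C`. -/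
def ClubGuessing (η : Ladder) : Prop :=
  ∀ C, IsClubOmegaOne C → ∃ δ ∈ η.dom, AlmostSubset (η.lad δ) C

/-- η̄ is strongly club-guessing iff for every club C there is a club D with
`[η_δ] ⊆* C` for all δ ∈ D ∩ dom(η̄). -/
def StronglyGuessing (η : Ladder) : Prop :=
  ∀ C, IsClubOmegaOne C → ∃ D, IsClubOmegaOne D ∧ ∀ δ ∈ D ∩ η.dom, AlmostSubset (η.lad δ) C

/-- A club C avoids η̄ iff `[η_δ] ∩ C` is finite for every δ ∈ dom(η̄) outside
some non-stationary set. -/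
def Avoids (C : Set Ordinal) (η : Ladder) : Prop :=
  IsClubOmegaOne C ∧ ∃ N : Set Ordinal, ¬ Stationary N ∧
    ∀ δ ∈ η.dom, δ ∉ N → (η.lad δ ∩ C).Finite

/-- η̄ is avoidable iff some club avoids it. -/
def Avoidable (η : Ladder) : Prop := ∃ C, Avoids C η

/-- A set S ⊆ ω₁ is avoidable iff every ladder system over S is avoidable. -/
def AvoidableSet (S : Set Ordinal) : Prop := ∀ η : Ladder, η.dom ⊆ S → Avoidable η

/-- Two ladders are almost disjoint iff for some club C, `[η_δ] ∩ [μ_δ]` is finite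
for every δ ∈ C ∩ dom(η̄) ∩ dom(μ̄). -/
def AlmostDisjoint (η μ : Ladder) : Prop :=
  ∃ C, IsClubOmegaOne C ∧ ∀ δ ∈ C ∩ (η.dom ∩ μ.dom), (η.lad δ ∩ μ.lad δ).Finite

/-- `η̄ ⊴ μ̄` : η̄ is a subladder of μ̄. -/
def Subladder (η μ : Ladder) : Prop :=
  ∃ C, IsClubOmegaOne C ∧ C ∩ η.dom ⊆ μ.dom ∧
    ∀ δ ∈ C ∩ η.dom, AlmostSubset (η.lad δ) (μ.lad δ)

/-- η̄ is maximal for X iff dom(η̄) ⊆ X, η̄ is strongly club-guessing, and every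
ladder system over X almost disjoint from η̄ is avoidable. -/
def LadderMaximalFor (η : Ladder) (X : Set Ordinal) : Prop :=
  η.dom ⊆ X ∧ StronglyGuessing η ∧
    ∀ μ : Ladder, μ.dom ⊆ X → AlmostDisjoint μ η → Avoidable μ

/-- The diagonal union `∇_ξ A_ξ = {α < ω₁ : ∃ ξ < α, α ∈ A_ξ}`. -/
def diagUnion (A : Ordinal → Set Ordinal) : Set Ordinal :=
  {α | α < omegaOne ∧ ∃ ξ < α, α ∈ A ξ}

/-- H is S̄-small iff the set of i < ω₂ with H ∩ S_i stationary has size ≤ ℵ₁. -/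
def SSmall (S : Ordinal → Set Ordinal) (H : Set Ordinal) : Prop :=
  Cardinal.mk {i : Ordinal // i < omegaTwo ∧ Stationary (H ∩ S i)} ≤
    Cardinal.lift.{1,0} (Cardinal.aleph 1 : Cardinal.{0})

/-- Conditions A1–A5 for (S̄, η̄), with χ the family of maximal ladders from A3. -/
def CondA (S : Ordinal → Set Ordinal) (η : Ladder) (χ : Ordinal → Ladder) : Prop :=
  (∀ i < omegaTwo, S i ⊆ omegaOneSet ∧ Stationary (S i)) ∧
  (∀ i < omegaTwo, ∀ j < omegaTwo, i ≠ j → ¬ Stationary (S i ∩ S j)) ∧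
  -- A1
  (∀ i < omegaTwo, S i ⊆ η.dom) ∧
  -- A2
  (∀ μ : Ladder, AlmostDisjoint μ η → Avoidable μ) ∧
  -- A3
  (∀ i < omegaTwo, (χ i).dom = S i ∧ LadderMaximalFor (χ i) (S i)) ∧
  -- A4
  (∀ X : Set Ordinal, X ⊆ omegaOneSet →
      (∀ i < omegaTwo, ¬ Stationary (X ∩ S i)) → AvoidableSet X) ∧
  -- A5
  (∀ X : Set Ordinal, X ⊆ omegaOneSet → ¬ SSmall S X →
      ∀ ρ : Ladder, ρ.dom = X → Subladder ρ η →
        ∃ i, i < omegaTwo ∧ S i ⊆ X ∧ Subladder (χ i) ρ)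


section Proof

universe u

open Ordinal Cardinal

lemma omegaOne_isLimit : Order.IsSuccLimit (omegaOne : Ordinal.{u}) :=
  Cardinal.isSuccLimit_ord (Cardinal.aleph0_le_aleph 1)

lemma isClub_omegaOneSet : IsClubOmegaOne (omegaOneSet : Set Ordinal.{u}) := by
  refine ⟨fun x hx => hx, fun a ha => ⟨a + 1, by rw [Ordinal.add_one_eq_succ]; exact omegaOne_isLimit.succ_lt ha, lt_add_one a⟩,
    fun δ _ hδ _ => hδ⟩

lemma sup_lt_omegaOne (f : ℕ → Ordinal.{u}) (hf : ∀ n, f n < omegaOne) :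
    (⨆ n, f n) < omegaOne := by
  show (⨆ n, f n) < (Cardinal.aleph 1).ord
  refine Ordinal.iSup_lt_ord_lift ?_ hf
  rw [Cardinal.isRegular_aleph_one.cof_eq, Cardinal.mk_nat, Cardinal.lift_aleph0]
  exact Cardinal.aleph0_lt_aleph_one

lemma IsClubOmegaOne.inter {C D : Set Ordinal.{u}} (hC : IsClubOmegaOne C) (hD : IsClubOmegaOne D) :
    IsClubOmegaOne (C ∩ D) := by
  classical
  obtain ⟨hC1, hC2, hC3⟩ := hC
  obtain ⟨hD1, hD2, hD3⟩ := hD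
  set sC : Ordinal.{u} → Ordinal.{u} := fun x =>
    if h : x < omegaOne then Classical.choose (hC2 x h) else 0 with hsC
  set sD : Ordinal.{u} → Ordinal.{u} := fun x =>
    if h : x < omegaOne then Classical.choose (hD2 x h) else 0 with hsD
  have hsCp : ∀ x, x < omegaOne → sC x ∈ C ∧ x < sC x ∧ sC x < omegaOne := by
    intro x hx
    have := Classical.choose_spec (hC2 x hx)
    simp only [hsC, dif_pos hx]
    exact ⟨this.1, this.2, hC1 this.1⟩
  have hsDp : ∀ x, x < omegaOne → sD x ∈ D ∧ x < sD x ∧ sD x < omegaOne := by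
    intro x hx
    have := Classical.choose_spec (hD2 x hx)
    simp only [hsD, dif_pos hx]
    exact ⟨this.1, this.2, hD1 this.1⟩
  refine ⟨fun x hx => hC1 hx.1, ?_, ?_⟩
  · intro a ha
    set f : ℕ → Ordinal.{u} := fun n => Nat.rec a (fun n y => if n % 2 = 0 then sC y else sD y) n with hf
    have hstep : ∀ n, f n < omegaOne → f n < f (n + 1) ∧ f (n + 1) < omegaOne := by
      intro n hn
      show f n < (if n % 2 = 0 then sC (f n) else sD (f n)) ∧
        (if n % 2 = 0 then sC (f n) else sD (f n)) < omegaOne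
      by_cases h : n % 2 = 0
      · simp only [if_pos h]; exact ⟨(hsCp _ hn).2.1, (hsCp _ hn).2.2⟩
      · simp only [if_neg h]; exact ⟨(hsDp _ hn).2.1, (hsDp _ hn).2.2⟩
    have hlt : ∀ n, f n < omegaOne := by
      intro n; induction n with
      | zero => exact ha
      | succ k ih => exact (hstep k ih).2
    have hsucc : ∀ n, f n < f (n + 1) := fun n => (hstep n (hlt n)).1
    have hmono : StrictMono f := strictMono_nat_of_lt_succ hsucc
    have hCmem : ∀ k, f (2 * k + 1) ∈ C := by
      intro k
      have h2 : (2 * k) % 2 = 0 := by omega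
      show (if (2 * k) % 2 = 0 then sC (f (2 * k)) else sD (f (2 * k))) ∈ C
      rw [if_pos h2]; exact (hsCp (f (2 * k)) (hlt (2 * k))).1
    have hDmem : ∀ k, f (2 * k + 2) ∈ D := by
      intro k
      have h2 : ¬ (2 * k + 1) % 2 = 0 := by omega
      show (if (2 * k + 1) % 2 = 0 then sC (f (2 * k + 1)) else sD (f (2 * k + 1))) ∈ D
      rw [if_neg h2]; exact (hsDp (f (2 * k + 1)) (hlt (2 * k + 1))).1
    set δ : Ordinal.{u} := ⨆ n, f n with hδdef
    have hle : ∀ n, f n ≤ δ := fun n => Ordinal.le_iSup f n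
    have hflt : ∀ n, f n < δ := fun n => lt_of_lt_of_le (hsucc n) (hle (n + 1))
    have hδlt : δ < omegaOne := sup_lt_omegaOne f hlt
    have haδ : a < δ := hflt 0
    have hcof : ∀ b < δ, ∃ n, b < f n := by
      intro b hb
      rw [hδdef, Ordinal.lt_iSup_iff] at hb
      exact hb
    have hδ0 : δ ≠ 0 := by
      intro h0
      exact absurd haδ (by rw [h0]; exact not_lt_zero (a := a))
    have hδC : δ ∈ C := by
      refine hC3 δ hδ0 hδlt ?_
      intro b hb
      obtain ⟨n, hn⟩ := hcof b hb
      exact ⟨f (2 * n + 1), hCmem n,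
        lt_of_lt_of_le hn (hmono.monotone (show n ≤ 2 * n + 1 by omega)), hflt (2 * n + 1)⟩
    have hδD : δ ∈ D := by
      refine hD3 δ hδ0 hδlt ?_
      intro b hb
      obtain ⟨n, hn⟩ := hcof b hb
      exact ⟨f (2 * n + 2), hDmem n,
        lt_of_lt_of_le hn (hmono.monotone (show n ≤ 2 * n + 2 by omega)), hflt (2 * n + 2)⟩
    exact ⟨δ, ⟨hδC, hδD⟩, haδ⟩
  · intro δ h0 hδ hlim
    constructor
    · refine hC3 δ h0 hδ fun b hb => ?_
      obtain ⟨c, hc, hbc, hcδ⟩ := hlim b hb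
      exact ⟨c, hc.1, hbc, hcδ⟩
    · refine hD3 δ h0 hδ fun b hb => ?_
      obtain ⟨c, hc, hbc, hcδ⟩ := hlim b hb
      exact ⟨c, hc.2, hbc, hcδ⟩

lemma not_stationary_iff {N : Set Ordinal.{u}} (h : ¬ Stationary N) :
    ∃ E, IsClubOmegaOne E ∧ N ∩ E = ∅ := by
  unfold Stationary at h
  push_neg at h
  obtain ⟨E, hE1, hE2⟩ := h
  exact ⟨E, hE1, hE2⟩

/-- The set of n where the μ-ladder at δ misses the η-ladder. -/
def missSet (η μ : Ladder) (δ : Ordinal.{0}) : Set ℕ :=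
  {n | μ.toFun δ n ∉ η.lad δ}

/-- The bad set: δ ∈ dom μ where either δ ∉ dom η or [μ_δ] \ [η_δ] is infinite. -/
def badSet (η μ : Ladder) : Set Ordinal.{0} :=
  {δ | δ ∈ μ.dom ∧ (δ ∉ η.dom ∨ (missSet η μ δ).Infinite)}

open Classical in
noncomputable def nuFun (η μ : Ladder) (δ : Ordinal.{0}) (n : ℕ) : Ordinal.{0} :=
  if h : (missSet η μ δ).Infinite then
    μ.toFun δ (Nat.nth (fun n => μ.toFun δ n ∉ η.lad δ) n)
  else μ.toFun δ n

lemma nuFun_ge (η μ : Ladder) {δ : Ordinal.{0}} (hδ : δ ∈ μ.dom) (n : ℕ) :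
    μ.toFun δ n ≤ nuFun η μ δ n := by
  unfold nuFun
  split
  · rename_i h
    refine (μ.mono δ hδ).monotone (Nat.le_nth ?_)
    intro hf
    exact absurd hf h
  · exact le_rfl

noncomputable def nu (η μ : Ladder) : Ladder where
  dom := badSet η μ
  toFun := nuFun η μ
  dom_lt := fun δ h => μ.dom_lt δ h.1
  mono := by
    intro δ hδ
    unfold nuFun
    split
    · rename_i h
      exact (μ.mono δ hδ.1).comp (Nat.nth_strictMono h)
    · exact μ.mono δ hδ.1
  lt := by
    intro δ hδ n
    unfold nuFun
    split
    · exact μ.lt δ hδ.1 _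
    · exact μ.lt δ hδ.1 n
  cofinal := by
    intro δ hδ a ha
    obtain ⟨n, hn⟩ := μ.cofinal δ hδ.1 a ha
    exact ⟨n, lt_of_lt_of_le hn (nuFun_ge η μ hδ.1 n)⟩

lemma nu_lad_subset (η μ : Ladder) (δ : Ordinal.{0}) :
    (nu η μ).lad δ ⊆ μ.lad δ := by
  rintro x ⟨n, rfl⟩
  show nuFun η μ δ n ∈ μ.lad δ
  unfold nuFun
  split
  · exact ⟨_, rfl⟩
  · exact ⟨n, rfl⟩

lemma diff_eq_image (η μ : Ladder) (δ : Ordinal.{0}) :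
    μ.lad δ \ η.lad δ = μ.toFun δ '' (missSet η μ δ) := by
  ext x
  constructor
  · rintro ⟨⟨n, rfl⟩, hx⟩
    exact ⟨n, hx, rfl⟩
  · rintro ⟨n, hn, rfl⟩
    exact ⟨⟨n, rfl⟩, hn⟩

theorem stmt6' (X : Set Ordinal.{0}) (η μ : Ladder)
    (hη : LadderMaximalFor η X) (hμ : StronglyGuessing μ) (hdom : μ.dom ⊆ X) :
    Subladder μ η := by
  classical
  set ν := nu η μ with hν
  have hνsub : ν.dom ⊆ X := fun δ hδ => hdom hδ.1
  -- ν is almost disjoint from η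
  have hAD : AlmostDisjoint ν η := by
    refine ⟨omegaOneSet, isClub_omegaOneSet, ?_⟩
    rintro δ ⟨-, hδν, hδη⟩
    have hinf : (missSet η μ δ).Infinite := by
      rcases hδν.2 with h | h
      · exact absurd hδη h
      · exact h
    have : ν.lad δ ∩ η.lad δ = ∅ := by
      rw [Set.eq_empty_iff_forall_notMem]
      rintro x ⟨⟨n, rfl⟩, hx⟩
      have hx' : ν.toFun δ n = μ.toFun δ (Nat.nth (fun n => μ.toFun δ n ∉ η.lad δ) n) := by
        show nuFun η μ δ n = _
        unfold nuFun
        rw [dif_pos hinf]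
      have := Nat.nth_mem_of_infinite (p := fun n => μ.toFun δ n ∉ η.lad δ) hinf n
      rw [hx'] at hx
      exact this hx
    rw [this]
    exact Set.finite_empty
  obtain ⟨C, ⟨hCclub, N, hNns, hNfin⟩⟩ := hη.2.2 ν hνsub hAD
  obtain ⟨D, hDclub, hguess⟩ := hμ C hCclub
  obtain ⟨E, hEclub, hNE⟩ := not_stationary_iff hNns
  -- every δ ∈ D ∩ ν.dom lies in N
  have hDN : ∀ δ ∈ D, δ ∈ ν.dom → δ ∈ N := by
    intro δ hδD hδν
    by_contra hδN
    have hfin : (ν.lad δ ∩ C).Finite := hNfin δ hδν hδN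
    have hg : (μ.lad δ \ C).Finite := hguess δ ⟨hδD, hδν.1⟩
    have hsub : ν.lad δ ⊆ (ν.lad δ ∩ C) ∪ (μ.lad δ \ C) := by
      intro x hx
      by_cases hxC : x ∈ C
      · exact Or.inl ⟨hx, hxC⟩
      · exact Or.inr ⟨nu_lad_subset η μ δ hx, hxC⟩
    have hνfin : (ν.lad δ).Finite := (hfin.union hg).subset hsub
    have hνinf : (ν.lad δ).Infinite :=
      Set.infinite_range_of_injective (ν.mono δ hδν).injective
    exact hνinf hνfin
  refine ⟨D ∩ E, hDclub.inter hEclub, ?_, ?_⟩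
  · rintro δ ⟨⟨hδD, hδE⟩, hδμ⟩
    by_contra hδη
    have : δ ∈ N := hDN δ hδD ⟨hδμ, Or.inl hδη⟩
    exact absurd (Set.mem_inter this hδE) (by rw [hNE]; exact Set.notMem_empty δ)
  · rintro δ ⟨⟨hδD, hδE⟩, hδμ⟩
    have hnotbad : δ ∉ ν.dom := by
      intro hδν
      exact absurd (Set.mem_inter (hDN δ hδD hδν) hδE)
        (by rw [hNE]; exact Set.notMem_empty δ)
    have hfinmiss : (missSet η μ δ).Finite := by
      by_contra h
      exact hnotbad ⟨hδμ, Or.inr h⟩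
    show (μ.lad δ \ η.lad δ).Finite
    rw [diff_eq_image]
    exact hfinmiss.image _

end Proof

/-- If η̄ is maximal for X and μ̄ is strongly club-guessing with dom(μ̄) ⊆ X,
then μ̄ ⊴ η̄. -/
theorem stmt6 (X : Set Ordinal) (η μ : Ladder)
    (hη : LadderMaximalFor η X) (hμ : StronglyGuessing μ) (hdom : μ.dom ⊆ X) :
    Subladder μ η := by
  exact stmt6' X η μ hη hμ hdom
end

section
/- (Lemma 2.1(2)) Assume conditions A1–A5 hold for (S̄, η̄). Then every avoidable subset of ω₁ is S̄-small, i.e., I₀ ⊆ I(S̄). -/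
open Set

lemma iSup_lt_omegaOne (f : ℕ → Ordinal) (hf : ∀ n, f n < omegaOne) :
    iSup f < omegaOne := by
  unfold omegaOne at *
  apply Ordinal.iSup_lt_ord_lift _ hf
  rw [Cardinal.isRegular_aleph_one.cof_eq]
  simpa using Cardinal.aleph0_lt_aleph_one

lemma isClub_inter {C D : Set Ordinal} (hC : IsClubOmegaOne C) (hD : IsClubOmegaOne D) :
    IsClubOmegaOne (C ∩ D) := by
  obtain ⟨hC1, hC2, hC3⟩ := hC
  obtain ⟨hD1, hD2, hD3⟩ := hD
  classical
  -- choice functions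
  set fC : Ordinal → Ordinal := fun x => if h : x < omegaOne then (hC2 x h).choose else 0
    with hfC
  set fD : Ordinal → Ordinal := fun x => if h : x < omegaOne then (hD2 x h).choose else 0
    with hfD
  have hfCp : ∀ x, x < omegaOne → fC x ∈ C ∧ x < fC x ∧ fC x < omegaOne := by
    intro x hx
    have := (hC2 x hx).choose_spec
    simp only [hfC, dif_pos hx]
    exact ⟨this.1, this.2, hC1 this.1⟩
  have hfDp : ∀ x, x < omegaOne → fD x ∈ D ∧ x < fD x ∧ fD x < omegaOne := by
    intro x hx
    have := (hD2 x hx).choose_spec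
    simp only [hfD, dif_pos hx]
    exact ⟨this.1, this.2, hD1 this.1⟩
  refine ⟨fun x hx => hC1 hx.1, ?_, ?_⟩
  · -- unboundedness
    intro a ha
    set seq : ℕ → Ordinal := fun n => Nat.rec (fC a) (fun _ x => fC (fD x)) n with hseq
    have hseq0 : seq 0 = fC a := rfl
    have hseqS : ∀ n, seq (n + 1) = fC (fD (seq n)) := fun n => rfl
    have key : ∀ n, seq n ∈ C ∧ seq n < omegaOne := by
      intro n
      induction n with
      | zero => exact ⟨(hfCp a ha).1, (hfCp a ha).2.2⟩
      | succ k ih =>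
        have h1 := hfDp (seq k) ih.2
        have h2 := hfCp (fD (seq k)) h1.2.2
        exact ⟨h2.1, h2.2.2⟩
    have hlt : ∀ n, seq n < fD (seq n) ∧ fD (seq n) < seq (n + 1) := by
      intro n
      have h1 := hfDp (seq n) (key n).2
      have h2 := hfCp (fD (seq n)) h1.2.2
      exact ⟨h1.2.1, h2.2.1⟩
    have hmono : StrictMono seq := strictMono_nat_of_lt_succ fun n =>
      (hlt n).1.trans (hlt n).2
    set δ : Ordinal := iSup seq with hδ
    have hle : ∀ n, seq n ≤ δ := fun n => Ordinal.le_iSup seq n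
    have hδω : δ < omegaOne := iSup_lt_omegaOne seq fun n => (key n).2
    have hsn : ∀ n, seq n < δ := fun n => lt_of_lt_of_le (hmono (Nat.lt_succ_self n)) (hle (n+1))
    have haδ : a < δ := lt_of_lt_of_le (hfCp a ha).2.1 (hle 0)
    have hexn : ∀ x < δ, ∃ n, x < seq n := by
      intro x hx
      by_contra h
      push_neg at h
      exact absurd (Ordinal.iSup_le h) (not_le.mpr hx)
    have hδ0 : δ ≠ 0 := by
      intro h
      exact absurd (h ▸ haδ) (not_lt_zero (a := a))
    have hδC : δ ∈ C := by
      refine hC3 δ hδ0 hδω fun x hx => ?_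
      obtain ⟨n, hn⟩ := hexn x hx
      exact ⟨seq n, (key n).1, hn, hsn n⟩
    have hδD : δ ∈ D := by
      refine hD3 δ hδ0 hδω fun x hx => ?_
      obtain ⟨n, hn⟩ := hexn x hx
      refine ⟨fD (seq n), (hfDp (seq n) (key n).2).1, hn.trans (hlt n).1, ?_⟩
      exact lt_of_lt_of_le ((hlt n).2.trans (hmono (Nat.lt_succ_self (n+1)))) (hle (n+2))
    exact ⟨δ, ⟨hδC, hδD⟩, haδ⟩
  · -- closedness
    intro δ h0 hδ hlim
    constructor
    · exact hC3 δ h0 hδ fun a ha => (hlim a ha).imp fun b hb => ⟨hb.1.1, hb.2⟩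
    · exact hD3 δ h0 hδ fun a ha => (hlim a ha).imp fun b hb => ⟨hb.1.2, hb.2⟩

/-- Lemma 2.1(2): under A1–A5, every avoidable subset of ω₁ is S̄-small. -/
theorem stmt12 (S : Ordinal → Set Ordinal) (η : Ladder) (χ : Ordinal → Ladder)
    (hA : CondA S η χ) (X : Set Ordinal) (hX : X ⊆ omegaOneSet)
    (hav : AvoidableSet X) :
    SSmall S X := by
  obtain ⟨hS, hdisj, hA1, hA2, hA3, hA4, hA5⟩ := hA
  by_contra hns
  have hex : ∃ i, i < omegaTwo ∧ Stationary (X ∩ S i) := by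
    by_contra h
    push_neg at h
    apply hns
    have he : IsEmpty {i : Ordinal // i < omegaTwo ∧ Stationary (X ∩ S i)} :=
      ⟨fun ⟨i, h1, h2⟩ => h i h1 h2⟩
    unfold SSmall
    simp [Cardinal.mk_eq_zero]
  obtain ⟨i, hi, hstat⟩ := hex
  obtain ⟨hdom, _, hguess, _⟩ := hA3 i hi
  have hμdom : ((χ i).restrict X).dom ⊆ X := fun δ hδ => hδ.2
  obtain ⟨Cl, hCl, N, hN, hfin⟩ := hav ((χ i).restrict X) hμdom
  obtain ⟨D, hD, hDguess⟩ := hguess Cl hCl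
  rw [Stationary] at hN
  push_neg at hN
  obtain ⟨C', hC', hNC'⟩ := hN
  obtain ⟨δ, ⟨hδX, hδS⟩, hδD, hδC'⟩ := hstat (D ∩ C') (isClub_inter hD hC')
  have hδdom : δ ∈ (χ i).dom := hdom ▸ hδS
  have hδN : δ ∉ N := fun h => by
    have : δ ∈ N ∩ C' := ⟨h, hδC'⟩
    rw [hNC'] at this
    exact this
  have h1 : ((χ i).lad δ ∩ Cl).Finite := hfin δ ⟨hδdom, hδX⟩ hδN
  have h2 : ((χ i).lad δ \ Cl).Finite := hDguess δ ⟨hδD, hδdom⟩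
  have hfinlad : ((χ i).lad δ).Finite := by
    rw [← Set.inter_union_diff ((χ i).lad δ) Cl]
    exact h1.union h2
  exact Set.infinite_range_of_injective ((χ i).mono δ hδdom).injective hfinlad
end
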